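/- Let n ≥ 1, let K : ℝⁿ → (n×n real symmetric matrices) be smooth (the inverse supermetric), and let ξ : ℝⁿ → ℝⁿ and ω : ℝⁿ → ℝ be smooth with £_ξ K = −ω·K, where (£_ξK)^{αβ} = Σ_ρ (ξ^ρ ∂K^{αβ}/∂q^ρ − (∂ξ^α/∂q^ρ) K^{ρβ} − (∂ξ^β/∂q^ρ) K^{αρ}). Define on phase space ℝⁿ × ℝⁿ the functions Q(q,π) = Σ_α ξ^α(q) π_α and T(q,π) = (1/2) Σ_{κ,λ} K^{κλ}(q) π_κ π_λ. Then the canonical Poisson bracket satisfies {Q, T} = (1/2) ω(q) Σ_{κ,λ} K^{κλ}(q) π_κ π_λ = ω·T. In particular, if additionally H(q,π) := T(q,π) + V̄ with constant potential V̄, then {Q, H} = ω·(H − V̄), so Q is a conditional symmetry: {Q, H} vanishes on the constraint surface H = 0 up to the factor ω. -/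

import Mathlib

open scoped BigOperators

/-- Partial derivative `∂f/∂q^α` of a scalar function on `ℝⁿ`. -/
noncomputable def pd {n : ℕ} (f : (Fin n → ℝ) → ℝ) (α : Fin n) (q : Fin n → ℝ) : ℝ :=
  fderiv ℝ f q (Pi.single α 1)

/-- Lie derivative of a contravariant 2-tensor (inverse metric):
`(£_ξK)^{αβ} = Σ_ρ (ξ^ρ ∂K^{αβ}/∂q^ρ − (∂ξ^α/∂q^ρ) K^{ρβ} − (∂ξ^β/∂q^ρ) K^{αρ})`. -/
noncomputable def lieK {n : ℕ} (ξ : (Fin n → ℝ) → Fin n → ℝ)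
    (K : (Fin n → ℝ) → Fin n → Fin n → ℝ) (q : Fin n → ℝ) (α β : Fin n) : ℝ :=
  ∑ ρ : Fin n, (ξ q ρ * pd (fun p => K p α β) ρ q
      - pd (fun p => ξ p α) ρ q * K q ρ β
      - pd (fun p => ξ p β) ρ q * K q α ρ)

/-- The canonical Poisson bracket on phase space `ℝⁿ × ℝⁿ`:
`{F,H} = Σ_α (∂F/∂q^α ∂H/∂π_α − ∂F/∂π_α ∂H/∂q^α)`. -/
noncomputable def pb {n : ℕ} (F H : (Fin n → ℝ) × (Fin n → ℝ) → ℝ)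
    (x : (Fin n → ℝ) × (Fin n → ℝ)) : ℝ :=
  ∑ α : Fin n, (fderiv ℝ F x (Pi.single α 1, 0) * fderiv ℝ H x (0, Pi.single α 1)
      - fderiv ℝ F x (0, Pi.single α 1) * fderiv ℝ H x (Pi.single α 1, 0))

/-- `Q(q,π) = Σ_α ξ^α(q) π_α`. -/
noncomputable def Qfun {n : ℕ} (ξ : (Fin n → ℝ) → Fin n → ℝ)
    (x : (Fin n → ℝ) × (Fin n → ℝ)) : ℝ :=
  ∑ α : Fin n, ξ x.1 α * x.2 α

/-- `T(q,π) = (1/2) Σ_{κλ} K^{κλ}(q) π_κ π_λ`. -/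
noncomputable def Tfun {n : ℕ} (K : (Fin n → ℝ) → Fin n → Fin n → ℝ)
    (x : (Fin n → ℝ) × (Fin n → ℝ)) : ℝ :=
  (1 / 2) * ∑ κ : Fin n, ∑ lam : Fin n, K x.1 κ lam * x.2 κ * x.2 lam

/-!
`Q` and `T` are the fibrewise-polynomial symbols of the vector field `ξ` and of the tensor `K`,
and the Poisson bracket of such symbols is the symbol of the Lie derivative:
`{Q, T} = -½ (£_ξ K)(π, π)`. The conformal Killing condition `£_ξ K = -ω K` turns this into `ω T`;
adding a constant to `T` does not change the bracket.
-/

section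

variable {n : ℕ}

theorem hasFDerivAt_momentum (α : Fin n) (x : (Fin n → ℝ) × (Fin n → ℝ)) :
    HasFDerivAt (fun y : (Fin n → ℝ) × (Fin n → ℝ) => y.2 α)
      ((ContinuousLinearMap.proj α).comp
        (ContinuousLinearMap.snd ℝ (Fin n → ℝ) (Fin n → ℝ))) x :=
  ((ContinuousLinearMap.proj α).comp
    (ContinuousLinearMap.snd ℝ (Fin n → ℝ) (Fin n → ℝ))).hasFDerivAt

theorem fderiv_Qfun_apply {ξ : (Fin n → ℝ) → Fin n → ℝ}
    (hξ : ∀ α, Differentiable ℝ fun q => ξ q α) (x : (Fin n → ℝ) × (Fin n → ℝ))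
    (v w : Fin n → ℝ) :
    fderiv ℝ (Qfun ξ) x (v, w)
      = ∑ α, (fderiv ℝ (fun q => ξ q α) x.1 v * x.2 α + ξ x.1 α * w α) := by
  have h : HasFDerivAt (Qfun ξ) _ x := HasFDerivAt.fun_sum (u := Finset.univ) fun α _ =>
    ((hξ α x.1).hasFDerivAt.comp x hasFDerivAt_fst).mul (hasFDerivAt_momentum α x)
  rw [h.fderiv]
  simp [add_comm, mul_comm]

theorem fderiv_Tfun_apply {K : (Fin n → ℝ) → Fin n → Fin n → ℝ}
    (hK : ∀ κ lam, Differentiable ℝ fun q => K q κ lam) (x : (Fin n → ℝ) × (Fin n → ℝ))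
    (v w : Fin n → ℝ) :
    fderiv ℝ (Tfun K) x (v, w)
      = (1 / 2) * ∑ κ, ∑ lam, (fderiv ℝ (fun q => K q κ lam) x.1 v * x.2 κ * x.2 lam
          + K x.1 κ lam * w κ * x.2 lam + K x.1 κ lam * x.2 κ * w lam) := by
  have h : HasFDerivAt (Tfun K) _ x := .const_mul (.fun_sum (u := Finset.univ) fun κ _ =>
    .fun_sum (u := Finset.univ) fun lam _ =>
      (((hK κ lam x.1).hasFDerivAt.comp x hasFDerivAt_fst).mul
        (hasFDerivAt_momentum κ x)).mul (hasFDerivAt_momentum lam x)) (1 / 2 : ℝ)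
  rw [h.fderiv]
  simp [add_comm, mul_comm, mul_left_comm]

theorem sum_lieK_mul_mul (ξ : (Fin n → ℝ) → Fin n → ℝ) (K : (Fin n → ℝ) → Fin n → Fin n → ℝ)
    (q p : Fin n → ℝ) :
    ∑ κ, ∑ lam, lieK ξ K q κ lam * p κ * p lam
      = ∑ ρ, (ξ q ρ * ∑ κ, ∑ lam, pd (fun q => K q κ lam) ρ q * p κ * p lam
        - (∑ κ, pd (fun q => ξ q κ) ρ q * p κ) * ∑ lam, (K q ρ lam + K q lam ρ) * p lam) := by
  simp only [lieK, Finset.sum_mul]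
  rw [Finset.sum_congr rfl fun κ _ => Finset.sum_comm, Finset.sum_comm]
  refine Finset.sum_congr rfl fun ρ _ => ?_
  have swap : ∑ κ, ∑ lam, pd (fun q => ξ q lam) ρ q * K q κ ρ * p κ * p lam
      = ∑ κ, ∑ lam, pd (fun q => ξ q κ) ρ q * p κ * (K q lam ρ * p lam) := by
    rw [Finset.sum_comm]
    exact Finset.sum_congr rfl fun _ _ => Finset.sum_congr rfl fun _ _ => by ring
  have reorder : ∑ κ, ∑ lam, pd (fun q => ξ q κ) ρ q * K q ρ lam * p κ * p lam
      = ∑ κ, ∑ lam, pd (fun q => ξ q κ) ρ q * p κ * (K q ρ lam * p lam) :=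
    Finset.sum_congr rfl fun _ _ => Finset.sum_congr rfl fun _ _ => by ring
  simp only [sub_mul, Finset.sum_sub_distrib, swap, reorder, Finset.mul_sum, add_mul, mul_add,
    Finset.sum_add_distrib, ← mul_assoc]
  ring

theorem fderiv_Qfun_single_fst {ξ : (Fin n → ℝ) → Fin n → ℝ}
    (hξ : ∀ α, Differentiable ℝ fun q => ξ q α) (x : (Fin n → ℝ) × (Fin n → ℝ)) (ρ : Fin n) :
    fderiv ℝ (Qfun ξ) x (Pi.single ρ 1, 0) = ∑ α, pd (fun q => ξ q α) ρ x.1 * x.2 α := by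
  simp [fderiv_Qfun_apply hξ, pd]

theorem fderiv_Qfun_single_snd {ξ : (Fin n → ℝ) → Fin n → ℝ}
    (hξ : ∀ α, Differentiable ℝ fun q => ξ q α) (x : (Fin n → ℝ) × (Fin n → ℝ)) (ρ : Fin n) :
    fderiv ℝ (Qfun ξ) x (0, Pi.single ρ 1) = ξ x.1 ρ := by
  simp [fderiv_Qfun_apply hξ, Pi.single_apply]

theorem fderiv_Tfun_single_fst {K : (Fin n → ℝ) → Fin n → Fin n → ℝ}
    (hK : ∀ κ lam, Differentiable ℝ fun q => K q κ lam) (x : (Fin n → ℝ) × (Fin n → ℝ))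
    (ρ : Fin n) :
    fderiv ℝ (Tfun K) x (Pi.single ρ 1, 0)
      = (1 / 2) * ∑ κ, ∑ lam, pd (fun q => K q κ lam) ρ x.1 * x.2 κ * x.2 lam := by
  simp [fderiv_Tfun_apply hK, pd]

theorem fderiv_Tfun_single_snd {K : (Fin n → ℝ) → Fin n → Fin n → ℝ}
    (hK : ∀ κ lam, Differentiable ℝ fun q => K q κ lam) (x : (Fin n → ℝ) × (Fin n → ℝ))
    (ρ : Fin n) :
    fderiv ℝ (Tfun K) x (0, Pi.single ρ 1)
      = (1 / 2) * ∑ lam, (K x.1 ρ lam + K x.1 lam ρ) * x.2 lam := by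
  simp [fderiv_Tfun_apply hK, Pi.single_apply, Finset.sum_add_distrib, add_mul]

theorem pb_Qfun_Tfun {ξ : (Fin n → ℝ) → Fin n → ℝ} {K : (Fin n → ℝ) → Fin n → Fin n → ℝ}
    (hξ : ∀ α, Differentiable ℝ fun q => ξ q α)
    (hK : ∀ κ lam, Differentiable ℝ fun q => K q κ lam) (x : (Fin n → ℝ) × (Fin n → ℝ)) :
    pb (Qfun ξ) (Tfun K) x = -(1 / 2) * ∑ κ, ∑ lam, lieK ξ K x.1 κ lam * x.2 κ * x.2 lam := by
  rw [sum_lieK_mul_mul, pb, Finset.mul_sum]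
  refine Finset.sum_congr rfl fun ρ _ => ?_
  rw [fderiv_Qfun_single_fst hξ, fderiv_Qfun_single_snd hξ, fderiv_Tfun_single_fst hK,
    fderiv_Tfun_single_snd hK]
  ring

theorem pb_add_const_right (F H : (Fin n → ℝ) × (Fin n → ℝ) → ℝ) (c : ℝ) :
    pb F (fun y => H y + c) = pb F H := by
  ext x
  simp only [pb, fderiv_add_const]

end

theorem conditional_symmetry_poisson_bracket (n : ℕ)
    (K : (Fin n → ℝ) → Fin n → Fin n → ℝ)
    (hKsmooth : ∀ α β, ContDiff ℝ (⊤ : ℕ∞) fun q => K q α β)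
    (ξ : (Fin n → ℝ) → Fin n → ℝ) (ω : (Fin n → ℝ) → ℝ)
    (hξsmooth : ContDiff ℝ (⊤ : ℕ∞) ξ)
    (hlie : ∀ q α β, lieK ξ K q α β = -(ω q) * K q α β) :
    (∀ x : (Fin n → ℝ) × (Fin n → ℝ),
      pb (Qfun ξ) (Tfun K) x
        = (1 / 2) * ω x.1 * ∑ κ : Fin n, ∑ lam : Fin n, K x.1 κ lam * x.2 κ * x.2 lam)
    ∧ (∀ x : (Fin n → ℝ) × (Fin n → ℝ), pb (Qfun ξ) (Tfun K) x = ω x.1 * Tfun K x)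
    ∧ (∀ Vbar : ℝ, ∀ x : (Fin n → ℝ) × (Fin n → ℝ),
        pb (Qfun ξ) (fun y => Tfun K y + Vbar) x = ω x.1 * ((Tfun K x + Vbar) - Vbar)) := by
  have hξ : ∀ α, Differentiable ℝ fun q => ξ q α :=
    differentiable_pi.mp (hξsmooth.differentiable (by simp))
  have hK : ∀ κ lam, Differentiable ℝ fun q => K q κ lam :=
    fun κ lam => (hKsmooth κ lam).differentiable (by simp)
  have bracket : ∀ x, pb (Qfun ξ) (Tfun K) x = ω x.1 * Tfun K x := fun x => by
    simp only [pb_Qfun_Tfun hξ hK, hlie, Tfun, Finset.mul_sum]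
    ring_nf
  refine ⟨fun x => by rw [bracket, Tfun]; ring, bracket, fun Vbar x => ?_⟩
  rw [pb_add_const_right, bracket, add_sub_cancel_right]
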